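/- arXiv:1603.02060 — 5 statements merged into one kernel-verified Lean document; each statement's English description precedes it below -/
import Mathlib

section
/- The function φ(λ) := x₁(λ)²/2 + λ·x₁(λ)/(1+x₁(λ)), where x₁(λ) is the smaller root of x(1+x)^2 = -λ in (-1,0), is strictly decreasing on (0, 4/27); its derivative equals x₁(λ)/(1+x₁(λ)) < 0. -/
/-!
On (-1, -1/3) the map x ↦ -x(1+x)² is strictly increasing (its derivative -(1+x)(1+3x) is
positive), so x₁ is its local inverse: x₁ is continuous by monotonicity and differentiable by the
inverse function theorem. Differentiating φ, the terms containing x₁' cancel because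
λ = -x₁(1+x₁)², leaving φ' = x₁/(1+x₁), which is negative since x₁ ∈ (-1, 0).
-/

open Set Filter Topology

theorem StrictMonoOn.continuousAt_of_rightInvOn {α β : Type*} [LinearOrder α] [TopologicalSpace α]
    [OrderTopology α] [DenselyOrdered α] [LinearOrder β] [TopologicalSpace β] [OrderTopology β]
    {f : α → β} {g : β → α} {s : Set α} {t : Set β} {b : β} (hf : StrictMonoOn f s)
    (hfs : MapsTo f s t) (hgt : MapsTo g t s) (hgf : RightInvOn g f t) (ht : t ∈ 𝓝 b)
    (hs : s ∈ 𝓝 (g b)) : ContinuousAt g b := by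
  have hg_mono : MonotoneOn g t := fun y hy y' hy' hyy' => by
    rwa [← hf.le_iff_le (hgt hy) (hgt hy'), hgf hy, hgf hy']
  have hs_image : s ⊆ g '' t := fun x hx =>
    ⟨f x, hfs hx, hf.injOn (hgt (hfs hx)) hx (hgf (hfs hx))⟩
  exact continuousAt_of_monotoneOn_of_image_mem_nhds hg_mono ht (mem_of_superset hs hs_image)

theorem hasDerivAt_neg_mul_one_add_sq (x : ℝ) :
    HasDerivAt (fun x : ℝ => -(x * (1 + x) ^ 2)) (-((1 + x) * (1 + 3 * x))) x := by
  refine ((hasDerivAt_id' x).fun_mul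
    (((hasDerivAt_id' x).const_add 1).fun_pow 2)).fun_neg.congr_deriv ?_
  push_cast
  ring

theorem strictMonoOn_neg_mul_one_add_sq :
    StrictMonoOn (fun x : ℝ => -(x * (1 + x) ^ 2)) (Ioo (-1) (-1/3)) := by
  refine strictMonoOn_of_deriv_pos (convex_Ioo _ _)
    (fun x _ => (hasDerivAt_neg_mul_one_add_sq x).continuousAt.continuousWithinAt) ?_
  rw [interior_Ioo]
  rintro x ⟨hx₁, hx₂⟩
  rw [(hasDerivAt_neg_mul_one_add_sq x).deriv]
  nlinarith

section

variable {x1 : ℝ → ℝ}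
    (hx1 : ∀ lam ∈ Ioo (0 : ℝ) (4/27), x1 lam ∈ Ioo (-1 : ℝ) (-1/3) ∧ x1 lam * (1 + x1 lam) ^ 2 = -lam)
include hx1

theorem hasDerivAt_x1 {lam : ℝ} (hlam : lam ∈ Ioo (0 : ℝ) (4/27)) :
    HasDerivAt x1 (-((1 + x1 lam) * (1 + 3 * x1 lam)))⁻¹ lam := by
  have hinv : RightInvOn x1 (fun x : ℝ => -(x * (1 + x) ^ 2)) (Ioo 0 (4/27)) := fun y hy => by
    simp only [(hx1 y hy).2, neg_neg]
  have hmaps : MapsTo (fun x : ℝ => -(x * (1 + x) ^ 2)) (Ioo (-1) (-1/3)) (Ioo 0 (4/27)) := by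
    rintro x ⟨hx₁, hx₂⟩
    constructor <;> dsimp only <;> nlinarith [sq_nonneg (x + 1/3)]
  obtain ⟨⟨hx₁, hx₂⟩, -⟩ := hx1 lam hlam
  have hcont : ContinuousAt x1 lam :=
    strictMonoOn_neg_mul_one_add_sq.continuousAt_of_rightInvOn hmaps (fun y hy => (hx1 y hy).1)
      hinv (isOpen_Ioo.mem_nhds hlam) (isOpen_Ioo.mem_nhds ⟨hx₁, hx₂⟩)
  refine (hasDerivAt_neg_mul_one_add_sq _).of_local_left_inverse hcont ?_
    (eventually_of_mem (isOpen_Ioo.mem_nhds hlam) hinv)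
  nlinarith

theorem hasDerivAt_envelope {lam : ℝ} (hlam : lam ∈ Ioo (0 : ℝ) (4/27)) :
    HasDerivAt (fun lam => x1 lam ^ 2 / 2 + lam * x1 lam / (1 + x1 lam))
      (x1 lam / (1 + x1 lam)) lam := by
  obtain ⟨⟨hx₁, hx₂⟩, hroot⟩ := hx1 lam hlam
  have hx1' := hasDerivAt_x1 hx1 hlam
  refine (((hx1'.fun_pow 2).div_const 2).fun_add
    (((hasDerivAt_id' lam).fun_mul hx1').fun_div (hx1'.const_add 1) (by linarith))).congr_deriv ?_
  generalize x1 lam = x at *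
  obtain rfl : lam = -(x * (1 + x) ^ 2) := by linarith
  have h1 : 1 + x ≠ 0 := by linarith
  have h2 : 1 + 3 * x ≠ 0 := by linarith
  push_cast
  field_simp
  ring

end

/-- φ(λ) = x₁(λ)²/2 + λ·x₁(λ)/(1+x₁(λ)) is strictly decreasing on
(0, 4/27); its derivative is x₁(λ)/(1+x₁(λ)) < 0. -/
theorem stmt_8 (x1 : ℝ → ℝ)
    (hx1 : ∀ lam ∈ Set.Ioo (0 : ℝ) (4/27),
      x1 lam ∈ Set.Ioo (-1 : ℝ) (-1/3) ∧ x1 lam * (1 + x1 lam) ^ 2 = -lam)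
    (phi : ℝ → ℝ)
    (hphi : ∀ lam, phi lam = (x1 lam) ^ 2 / 2 + lam * x1 lam / (1 + x1 lam)) :
    StrictAntiOn phi (Set.Ioo (0 : ℝ) (4/27)) ∧
    ∀ lam ∈ Set.Ioo (0 : ℝ) (4/27),
      HasDerivAt phi (x1 lam / (1 + x1 lam)) lam ∧ x1 lam / (1 + x1 lam) < 0 := by
  obtain rfl : phi = fun lam => x1 lam ^ 2 / 2 + lam * x1 lam / (1 + x1 lam) := funext hphi
  have hderiv : ∀ lam ∈ Ioo (0 : ℝ) (4/27),
      HasDerivAt _ (x1 lam / (1 + x1 lam)) lam ∧ x1 lam / (1 + x1 lam) < 0 := fun lam hlam =>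
    have ⟨hx₁, hx₂⟩ := (hx1 lam hlam).1
    ⟨hasDerivAt_envelope hx1 hlam, div_neg_of_neg_of_pos (by linarith) (by linarith)⟩
  refine ⟨strictAntiOn_of_deriv_neg (convex_Ioo _ _)
    (fun lam hlam => (hderiv lam hlam).1.continuousAt.continuousWithinAt) ?_, hderiv⟩
  rw [interior_Ioo]
  exact fun lam hlam => (hderiv lam hlam).1.deriv ▸ (hderiv lam hlam).2
end

section
/- There exists a unique λ ∈ (0, 4/27) with φ(λ) = 0, where φ(λ) = x₁(λ)²/2 + λ·x₁(λ)/(1+x₁(λ)) and x₁(λ) is the smaller root of x(1+x)^2 = -λ; this value is λ = 1/8, and correspondingly x₁(1/8) = -1/2. -/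
/-! Eliminating λ = -x(1+x)² turns φ into -x²(x + 1/2), whose only root with x ∈ (-1, -1/3) is
x = -1/2, i.e. λ = 1/8. Conversely -1/2 is the only root of x(1+x)² = -1/8 in (-1, -1/3), since
the cofactor x² + 3x/2 + 1/4 is negative there. -/

lemma sq_div_two_add_mul_div_eq_of_mul_one_add_sq_eq_neg {x lam : ℝ}
    (hroot : x * (1 + x) ^ 2 = -lam) :
    x ^ 2 / 2 + lam * x / (1 + x) = -(x ^ 2 * (x + 1 / 2)) := by
  rcases eq_or_ne (1 + x) 0 with hx | hx
  · -- at x = -1 the division is the junk value 0 and both sides equal 1/2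
    obtain rfl : x = -1 := by linarith
    norm_num
  · rw [show lam = -(x * (1 + x) ^ 2) by linarith]
    field_simp
    ring

lemma eq_neg_half_of_mul_one_add_sq_eq {x : ℝ} (hx : x ∈ Set.Ioo (-1 : ℝ) (-1/3))
    (hroot : x * (1 + x) ^ 2 = -(1/8)) : x = -1/2 := by
  obtain ⟨hlo, hhi⟩ := hx
  have hfactor : (x + 1/2) * (x ^ 2 + 3/2 * x + 1/4) = 0 := by linear_combination hroot
  have hcofactor : x ^ 2 + 3/2 * x + 1/4 < 0 := by nlinarith
  linarith [(mul_eq_zero.mp hfactor).resolve_right hcofactor.ne]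

/-- There is a unique λ ∈ (0, 4/27) with φ(λ) = 0; it is λ = 1/8, and
x₁(1/8) = -1/2. -/
theorem stmt_11 (x1 : ℝ → ℝ)
    (hx1 : ∀ lam ∈ Set.Ioo (0 : ℝ) (4/27),
      x1 lam ∈ Set.Ioo (-1 : ℝ) (-1/3) ∧ x1 lam * (1 + x1 lam) ^ 2 = -lam)
    (phi : ℝ → ℝ)
    (hphi : ∀ lam, phi lam = (x1 lam) ^ 2 / 2 + lam * x1 lam / (1 + x1 lam)) :
    ((1/8 : ℝ) ∈ Set.Ioo (0 : ℝ) (4/27) ∧ phi (1/8) = 0 ∧ x1 (1/8) = -1/2) ∧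
    ∀ lam ∈ Set.Ioo (0 : ℝ) (4/27), phi lam = 0 → lam = 1/8 := by
  have hmem : (1/8 : ℝ) ∈ Set.Ioo (0 : ℝ) (4/27) := by norm_num
  have hx1_eighth : x1 (1/8) = -1/2 :=
    eq_neg_half_of_mul_one_add_sq_eq (hx1 _ hmem).1 (hx1 _ hmem).2
  refine ⟨⟨hmem, by rw [hphi, hx1_eighth]; norm_num, hx1_eighth⟩, fun lam hlam hzero => ?_⟩
  obtain ⟨⟨-, hhi⟩, hroot⟩ := hx1 lam hlam
  rw [hphi, sq_div_two_add_mul_div_eq_of_mul_one_add_sq_eq_neg hroot] at hzero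
  have hx_ne : x1 lam ≠ 0 := by linarith
  have hx_half : x1 lam = -1/2 := by
    have := neg_eq_zero.mp hzero
    linarith [(mul_eq_zero.mp this).resolve_left (pow_ne_zero 2 hx_ne)]
  rw [hx_half] at hroot
  linarith
end

section
/- For fixed λ ∈ (0, 4/27) and α > 0, on the line segment {(x, m(x - x₂(λ))) : x₁(λ) ≤ x ≤ x₂(λ)} with slope m = -α/2 - √((α/2)² - s(λ))/1 (any negative root m of m² + αm + s(λ) = 0 when α > 2√(s(λ))), the vector field V(x,y) = (y, -(αy + f(x,λ))) satisfies ⟨N, V⟩ ≤ 0 where N = (-m, 1), i.e. the field points into the triangle below the segment. -/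
/-!
Along the segment `y = m (x - x₂)` the normal component of the field is
`-m y - α y - f x = -(m² + α m)(x - x₂) - f x = s (x - x₂) - f x`, because `m² + α m = -s`.
So the claim is that `f` lies above its tangent line at the root `x₂`. Using `f x₂ = 0` to
eliminate `λ = -x₂ (1 + x₂)²`, the gap between `f` and that tangent factors as
`-x₂ (x - x₂)² (2x + 3 + x₂) / ((1 + x)² (1 + x₂))`, which is nonnegative for `x > -1`.
-/

/-- The paper's `f(x, λ)`. -/
noncomputable def restoringForce (lam x : ℝ) : ℝ := x + lam / (1 + x) ^ 2

lemma restoringForce_sub_tangent {lam c x : ℝ} (hc : 1 + c ≠ 0) (hx : 1 + x ≠ 0)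
    (hroot : restoringForce lam c = 0) :
    restoringForce lam x - (1 - 2 * lam / (1 + c) ^ 3) * (x - c) =
      -c * (x - c) ^ 2 * (2 * x + 3 + c) / ((1 + x) ^ 2 * (1 + c)) := by
  have hlam : lam = -c * (1 + c) ^ 2 := by
    unfold restoringForce at hroot
    field_simp at hroot
    linear_combination hroot
  unfold restoringForce
  rw [hlam]
  field_simp
  ring

lemma tangent_le_restoringForce {lam c x : ℝ} (hc : c ∈ Set.Ioo (-1 : ℝ) 0) (hx : -1 < x)
    (hroot : restoringForce lam c = 0) :
    (1 - 2 * lam / (1 + c) ^ 3) * (x - c) ≤ restoringForce lam x := by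
  have hc1 : 0 < 1 + c := by linarith [hc.1]
  have hx1 : 0 < 1 + x := by linarith
  have hgap := restoringForce_sub_tangent hc1.ne' hx1.ne' hroot
  have hnum : 0 ≤ -c * (x - c) ^ 2 * (2 * x + 3 + c) :=
    mul_nonneg (mul_nonneg (by linarith [hc.2]) (sq_nonneg _)) (by linarith [hc.1])
  have : 0 ≤ restoringForce lam x - (1 - 2 * lam / (1 + c) ^ 3) * (x - c) := by
    rw [hgap]
    positivity
  linarith

theorem stmt_16_general (lam alpha x1 x2 s m : ℝ)
    (hx1 : x1 ∈ Set.Ioo (-1 : ℝ) (-1/3)) (hx2 : x2 ∈ Set.Ioo (-1/3 : ℝ) 0)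
    (hr2 : x2 + lam / (1 + x2) ^ 2 = 0)
    (hs : s = 1 - 2 * lam / (1 + x2) ^ 3)
    (hroot : m ^ 2 + alpha * m + s = 0) :
    ∀ x ∈ Set.Icc x1 x2,
      (-m) * (m * (x - x2)) +
        (-(alpha * (m * (x - x2)) + (x + lam / (1 + x) ^ 2))) ≤ 0 := by
  intro x hx
  have hx2' : x2 ∈ Set.Ioo (-1 : ℝ) 0 := ⟨by linarith [hx2.1], hx2.2⟩
  have htangent : s * (x - x2) ≤ restoringForce lam x := by
    rw [hs]
    exact tangent_le_restoringForce hx2' (by linarith [hx1.1, hx.1]) hr2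
  have hnormal : (-m) * (m * (x - x2)) - alpha * (m * (x - x2)) = s * (x - x2) := by
    linear_combination (-(x - x2)) * hroot
  unfold restoringForce at htangent
  linarith

/-- On the segment {(x, m(x-x₂)) : x₁ ≤ x ≤ x₂} with m a negative root of
m² + αm + s(λ) = 0 (α > 2√s(λ)), the vector field
V(x,y) = (y, -(αy + f(x,λ))) satisfies ⟨N,V⟩ ≤ 0 with N = (-m, 1). -/
theorem stmt_16 (lam alpha x1 x2 s m : ℝ)
    (h0 : 0 < lam) (h1 : lam < 4/27)
    (hx1 : x1 ∈ Set.Ioo (-1 : ℝ) (-1/3)) (hx2 : x2 ∈ Set.Ioo (-1/3 : ℝ) 0)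
    (hr1 : x1 + lam / (1 + x1) ^ 2 = 0) (hr2 : x2 + lam / (1 + x2) ^ 2 = 0)
    (hs : s = 1 - 2 * lam / (1 + x2) ^ 3)
    (halpha : 2 * Real.sqrt s < alpha)
    (hm : m < 0) (hroot : m ^ 2 + alpha * m + s = 0) :
    ∀ x ∈ Set.Icc x1 x2,
      (-m) * (m * (x - x2)) +
        (-(alpha * (m * (x - x2)) + (x + lam / (1 + x) ^ 2))) ≤ 0 :=
  stmt_16_general lam alpha x1 x2 s m hx1 hx2 hr2 hs hroot
end

section
/- For fixed λ ∈ (0, 4/27), s(λ) := 1 - 2λ/(1+x₂(λ))³ equals the supremum over x ∈ (x₁(λ), x₂(λ)) of f(x,λ)/(x - x₂(λ)), where f(x,λ) = x + λ/(1+x)². -/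
/-!
The root equation at `x₂` gives `λ = -x₂ (1 + x₂)²`, so `f(x, λ) = (g x - g x₂) / (1 + x)²` with
`g t = t (1 + t)²`. Dividing by `x - x₂` removes the singularity: the quotient extends to the
rational function `fQuotient x₂`, whose value at `x₂` is `g' x₂ / (1 + x₂)² = s(λ)`. On `(-1, x₂]`
it never exceeds that value, and the value at the right endpoint of an interval is the supremum
over the open interval.
-/

open Set

theorem isLUB_image_Ioo_of_le_right {α β : Type*} [LinearOrder α] [TopologicalSpace α]
    [OrderTopology α] [DenselyOrdered α] [TopologicalSpace β] [LinearOrder β] [OrderTopology β]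
    {f : α → β} {a b : α} (hab : a < b) (hf : ContinuousWithinAt f (Ioo a b) b)
    (hle : ∀ x ∈ Ioo a b, f x ≤ f b) : IsLUB (f '' Ioo a b) (f b) := by
  refine isLUB_of_mem_closure (forall_mem_image.2 hle) (hf.mem_closure_image ?_)
  rw [closure_Ioo hab.ne]
  exact right_mem_Icc.2 hab.le

/-- `(x + λ / (1 + x)²) / (x - c)` for `λ = -c (1 + c)²`, with the singularity at `x = c` removed. -/
noncomputable def fQuotient (c x : ℝ) : ℝ :=
  (x ^ 2 + x * c + c ^ 2 + 2 * x + 2 * c + 1) / (1 + x) ^ 2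

section

variable {lam c x : ℝ}

theorem lam_eq_of_root (hc : 1 + c ≠ 0) (hroot : c + lam / (1 + c) ^ 2 = 0) :
    lam = -c * (1 + c) ^ 2 := by
  field_simp at hroot
  linarith

theorem div_sub_eq_fQuotient (hlam : lam = -c * (1 + c) ^ 2) (hx : 1 + x ≠ 0) (hxc : x ≠ c) :
    (x + lam / (1 + x) ^ 2) / (x - c) = fQuotient c x := by
  have hxc' : x - c ≠ 0 := sub_ne_zero.2 hxc
  rw [fQuotient, hlam]
  field_simp
  ring

theorem fQuotient_self (hlam : lam = -c * (1 + c) ^ 2) (hc : 1 + c ≠ 0) :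
    fQuotient c c = 1 - 2 * lam / (1 + c) ^ 3 := by
  rw [fQuotient, hlam]
  field_simp
  ring

theorem fQuotient_le_self (hx : -1 < x) (hxc : x ≤ c) (hc : c ≤ 0) :
    fQuotient c x ≤ fQuotient c c := by
  have hx' : 0 < 1 + x := by linarith
  have hc' : 0 < 1 + c := by linarith
  have hgap : (c ^ 2 + c * c + c ^ 2 + 2 * c + 2 * c + 1) * (1 + x) ^ 2
      - (x ^ 2 + x * c + c ^ 2 + 2 * x + 2 * c + 1) * (1 + c) ^ 2
      = -c * (1 + c) * (c - x) * (2 * x + c + 3) := by ring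
  have hpos : 0 ≤ -c * (1 + c) * (c - x) * (2 * x + c + 3) := by
    have : 0 ≤ 2 * x + c + 3 := by linarith
    have : 0 ≤ c - x := by linarith
    have : 0 ≤ -c := by linarith
    positivity
  rw [fQuotient, fQuotient, div_le_div_iff₀ (by positivity) (by positivity)]
  linarith

theorem continuousAt_fQuotient_self (hc : 1 + c ≠ 0) : ContinuousAt (fQuotient c) c := by
  unfold fQuotient
  exact ContinuousAt.div (by fun_prop) (by fun_prop) (pow_ne_zero 2 hc)

end

theorem stmt_17_general (lam x1 x2 : ℝ)
    (hx1 : x1 ∈ Set.Ioo (-1 : ℝ) (-1/3)) (hx2 : x2 ∈ Set.Ioo (-1/3 : ℝ) 0)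
    (hr2 : x2 + lam / (1 + x2) ^ 2 = 0) :
    IsLUB ((fun x : ℝ => (x + lam / (1 + x) ^ 2) / (x - x2)) '' Set.Ioo x1 x2)
      (1 - 2 * lam / (1 + x2) ^ 3) := by
  obtain ⟨hx1_gt, hx1_lt⟩ := hx1
  obtain ⟨hx2_gt, hx2_lt⟩ := hx2
  have h1x2 : 1 + x2 ≠ 0 := by linarith
  have hlam := lam_eq_of_root h1x2 hr2
  have heq : EqOn (fun x : ℝ => (x + lam / (1 + x) ^ 2) / (x - x2)) (fQuotient x2) (Ioo x1 x2) :=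
    fun x hx => div_sub_eq_fQuotient hlam (by linarith [hx.1]) hx.2.ne
  rw [heq.image_eq, ← fQuotient_self hlam h1x2]
  exact isLUB_image_Ioo_of_le_right (by linarith)
    (continuousAt_fQuotient_self h1x2).continuousWithinAt
    fun x hx => fQuotient_le_self (by linarith [hx.1]) hx.2.le hx2_lt.le

/-- s(λ) := 1 - 2λ/(1+x₂(λ))³ equals the supremum over x ∈ (x₁, x₂) of
f(x,λ)/(x - x₂), where f(x,λ) = x + λ/(1+x)². -/
theorem stmt_17 (lam x1 x2 : ℝ) (h0 : 0 < lam) (h1 : lam < 4/27)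
    (hx1 : x1 ∈ Set.Ioo (-1 : ℝ) (-1/3)) (hx2 : x2 ∈ Set.Ioo (-1/3 : ℝ) 0)
    (hr1 : x1 + lam / (1 + x1) ^ 2 = 0) (hr2 : x2 + lam / (1 + x2) ^ 2 = 0) :
    IsLUB ((fun x : ℝ => (x + lam / (1 + x) ^ 2) / (x - x2)) '' Set.Ioo x1 x2)
      (1 - 2 * lam / (1 + x2) ^ 3) :=
  stmt_17_general lam x1 x2 hx1 hx2 hr2
end

section
/- If Φ₁, Φ₂ are continuous on [0, b), differentiable and positive on (0, b), satisfy Φⱼ'(u) = αⱼ - q(u)/Φⱼ(u) with Φⱼ(0) = 0, where q is continuous, α₁ < α₂, and Φ₁(u) < Φ₂(u) for all sufficiently small u > 0, then Φ₁(u) < Φ₂(u) for all u ∈ (0, b). -/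
/-!
Put D = Φ₂ - Φ₁. Wherever the two graphs meet, the terms q(u)/Φⱼ(u) coincide, so
D' = α₂ - α₁ > 0 at every zero of D in (0, b). A function that is positive just to the right
of 0 can therefore never reach 0: at a first zero it would have to come down from positive
values, which forces D' ≤ 0 there.
-/

open Set Filter Topology

theorem HasDerivAt.eventually_nhdsLT_lt {f : ℝ → ℝ} {f' x : ℝ} (hf : HasDerivAt f f' x)
    (hf' : 0 < f') : ∀ᶠ y in 𝓝[<] x, f y < f x := by
  filter_upwards [(hasDerivAt_iff_tendsto_slope_left_right.mp hf).1.eventually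
    (eventually_gt_nhds hf'), self_mem_nhdsWithin] with y hslope (hy : y < x)
  exact (slope_pos_iff_gt hy).mp hslope

theorem pos_of_deriv_pos_at_zeros {D D' : ℝ → ℝ} {a b : ℝ}
    (hD : ∀ x ∈ Ioo a b, HasDerivAt D (D' x) x)
    (hzero : ∀ x ∈ Ioo a b, D x = 0 → 0 < D' x)
    (hinit : ∀ᶠ x in 𝓝[>] a, 0 < D x) :
    ∀ x ∈ Ioo a b, 0 < D x := by
  intro x hx
  obtain ⟨s, hsD, hs⟩ := (hinit.and (Ioo_mem_nhdsGT hx.1)).exists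
  have hsub : Icc s x ⊆ Ioo a b := Icc_subset_Ioo hs.1 hx.2
  have hnonneg : ∀ y ∈ Icc s x, 0 ≤ D y :=
    image_le_of_deriv_right_lt_deriv_boundary' (f' := 0) continuousOn_const
      (fun _ _ => hasDerivWithinAt_const _ _ _) hsD.le
      (fun y hy => (hD y (hsub hy)).continuousAt.continuousWithinAt)
      (fun y hy => (hD y (hsub (Ico_subset_Icc_self hy))).hasDerivWithinAt)
      (fun y hy hy0 => hzero y (hsub (Ico_subset_Icc_self hy)) hy0.symm)
  refine (hnonneg x ⟨hs.2.le, le_rfl⟩).lt_of_ne' fun hx0 => ?_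
  obtain ⟨y, hyD, hy⟩ :=
    (((hD x hx).eventually_nhdsLT_lt (hzero x hx hx0)).and (Ioo_mem_nhdsLT hs.2)).exists
  exact (hnonneg y (Ioo_subset_Icc_self hy)).not_gt (hx0 ▸ hyD)

theorem stmt_19_general (b : ℝ) (q : ℝ → ℝ)
    (alpha1 alpha2 : ℝ) (h12 : alpha1 < alpha2)
    (Phi1 Phi2 : ℝ → ℝ)
    (hd1 : ∀ u ∈ Set.Ioo (0 : ℝ) b, HasDerivAt Phi1 (alpha1 - q u / Phi1 u) u)
    (hd2 : ∀ u ∈ Set.Ioo (0 : ℝ) b, HasDerivAt Phi2 (alpha2 - q u / Phi2 u) u)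
    (hsmall : ∃ ε > 0, ∀ u ∈ Set.Ioo (0 : ℝ) ε, Phi1 u < Phi2 u) :
    ∀ u ∈ Set.Ioo (0 : ℝ) b, Phi1 u < Phi2 u := by
  obtain ⟨ε, hε, hsmall⟩ := hsmall
  have hinit : ∀ᶠ u in 𝓝[>] 0, 0 < Phi2 u - Phi1 u :=
    eventually_of_mem (Ioo_mem_nhdsGT hε) fun u hu => sub_pos.mpr (hsmall u hu)
  have hcross : ∀ u ∈ Ioo 0 b, Phi2 u - Phi1 u = 0 →
      0 < (alpha2 - q u / Phi2 u) - (alpha1 - q u / Phi1 u) := by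
    intro u _ hu
    rw [sub_eq_zero.mp hu]
    linarith
  intro u hu
  exact sub_pos.mp (pos_of_deriv_pos_at_zeros (fun u hu => (hd2 u hu).sub (hd1 u hu))
    hcross hinit u hu)

/-- Monotonicity in α of solutions of Φ'(u) = α - q(u)/Φ(u): if
0 < α₁ < α₂, Φⱼ vanish at 0, are positive on (0,b), satisfy the respective
ODEs there, and Φ₁ < Φ₂ for all small u > 0, then Φ₁ < Φ₂ on (0,b). -/
theorem stmt_19 (b : ℝ) (hb : 0 < b) (q : ℝ → ℝ)
    (hq : ContinuousOn q (Set.Ico 0 b))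
    (alpha1 alpha2 : ℝ) (h1 : 0 < alpha1) (h12 : alpha1 < alpha2)
    (Phi1 Phi2 : ℝ → ℝ)
    (hc1 : ContinuousOn Phi1 (Set.Ico 0 b)) (hc2 : ContinuousOn Phi2 (Set.Ico 0 b))
    (h01 : Phi1 0 = 0) (h02 : Phi2 0 = 0)
    (hp1 : ∀ u ∈ Set.Ioo (0 : ℝ) b, 0 < Phi1 u)
    (hp2 : ∀ u ∈ Set.Ioo (0 : ℝ) b, 0 < Phi2 u)
    (hd1 : ∀ u ∈ Set.Ioo (0 : ℝ) b, HasDerivAt Phi1 (alpha1 - q u / Phi1 u) u)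
    (hd2 : ∀ u ∈ Set.Ioo (0 : ℝ) b, HasDerivAt Phi2 (alpha2 - q u / Phi2 u) u)
    (hsmall : ∃ ε > 0, ∀ u ∈ Set.Ioo (0 : ℝ) ε, Phi1 u < Phi2 u) :
    ∀ u ∈ Set.Ioo (0 : ℝ) b, Phi1 u < Phi2 u :=
  stmt_19_general b q alpha1 alpha2 h12 Phi1 Phi2 hd1 hd2 hsmall
end
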